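/- arXiv:1902.05465 — 13 statements merged into one kernel-verified Lean document; each statement's English description precedes it below -/
import Mathlib

section
/- Chain rule for change actions: let A, B, C be change actions with change monoids ΔA, ΔB, ΔC and actions ⊕. If df : A → ΔA → ΔB is a derivative of f : A → B and dg : B → ΔB → ΔC is a derivative of g : B → C, then the function (a, δ) ↦ dg (f a) (df a δ) is a derivative of g ∘ f : A → C. -/
/-- `act : A → Δ → A` is a change action structure on `A` for the additive
monoid `Δ`: the monoid acts on `A` via `act`. -/
def IsChangeAction {A Δ : Type*} [AddMonoid Δ] (act : A → Δ → A) : Prop :=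
  (∀ a, act a 0 = a) ∧ ∀ (a : A) (δ δ' : Δ), act a (δ + δ') = act (act a δ) δ'

/-- `df` is a derivative of `f` with respect to the change actions `actA`, `actB`. -/
def IsDerivative {A ΔA B ΔB : Type*} [AddMonoid ΔA] [AddMonoid ΔB]
    (actA : A → ΔA → A) (actB : B → ΔB → B) (f : A → B) (df : A → ΔA → ΔB) : Prop :=
  ∀ a δ, f (actA a δ) = actB (f a) (df a δ)

/-- `df` is a regular derivative candidate: it maps zero changes to zero and is
additive in the sense `df a (δ + δ') = df a δ + df (a ⊕ δ) δ'`. -/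
def IsRegularDerivative {A ΔA ΔB : Type*} [AddMonoid ΔA] [AddMonoid ΔB]
    (actA : A → ΔA → A) (df : A → ΔA → ΔB) : Prop :=
  (∀ a, df a 0 = 0) ∧ ∀ (a : A) (δ δ' : ΔA), df a (δ + δ') = df a δ + df (actA a δ) δ'

theorem chain_rule_general {A ΔA B ΔB C ΔC : Type*}
    [AddMonoid ΔA] [AddMonoid ΔB] [AddMonoid ΔC]
    (actA : A → ΔA → A) (actB : B → ΔB → B) (actC : C → ΔC → C)
    (f : A → B) (g : B → C) (df : A → ΔA → ΔB) (dg : B → ΔB → ΔC)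
    (hdf : IsDerivative actA actB f df) (hdg : IsDerivative actB actC g dg) :
    IsDerivative actA actC (g ∘ f) (fun a δ => dg (f a) (df a δ)) :=
  fun a δ => (congrArg g (hdf a δ)).trans (hdg (f a) (df a δ))

/-- Chain rule for change actions: if `df` is a derivative of `f : A → B` and
`dg` is a derivative of `g : B → C`, then `(a, δ) ↦ dg (f a) (df a δ)` is a
derivative of `g ∘ f`. -/
theorem chain_rule {A ΔA B ΔB C ΔC : Type*}
    [AddMonoid ΔA] [AddMonoid ΔB] [AddMonoid ΔC]
    (actA : A → ΔA → A) (actB : B → ΔB → B) (actC : C → ΔC → C)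
    (hA : IsChangeAction actA) (hB : IsChangeAction actB) (hC : IsChangeAction actC)
    (f : A → B) (g : B → C) (df : A → ΔA → ΔB) (dg : B → ΔB → ΔC)
    (hdf : IsDerivative actA actB f df) (hdg : IsDerivative actB actC g dg) :
    IsDerivative actA actC (g ∘ f) (fun a δ => dg (f a) (df a δ)) :=
  chain_rule_general actA actB actC f g df dg hdf hdg
end

section
/- If a function f : A → B between change actions is differentiable and has a unique derivative df (i.e. any function df' : A → ΔA → ΔB satisfying the derivative condition for f equals df), then df is regular: df a 0 = 0 and df a (δ + δ') = df a δ + df (a ⊕ δ) δ' for all a : A and δ, δ' : ΔA. -/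
/-! A derivative may be redefined at a single point `(a, δ)` to any value `v` that still
satisfies the derivative equation there. If the derivative is unique, `df a δ` must therefore
equal every such `v`; both `0` at `(a, 0)` and `df a δ + df (a ⊕ δ) δ'` at `(a, δ + δ')` are
such values by the change action laws. -/

section
variable {A ΔA B ΔB : Type*} [AddMonoid ΔA] [AddMonoid ΔB]
  {actA : A → ΔA → A} {actB : B → ΔB → B} {f : A → B} {df : A → ΔA → ΔB}

theorem IsDerivative.update [DecidableEq A] [DecidableEq ΔA]
    (hdf : IsDerivative actA actB f df) {a : A} {δ : ΔA} {v : ΔB}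
    (hv : f (actA a δ) = actB (f a) v) :
    IsDerivative actA actB f (Function.update df a (Function.update (df a) δ v)) := by
  intro x μ
  rcases eq_or_ne x a with rfl | hx
  · rcases eq_or_ne μ δ with rfl | hμ
    · simpa using hv
    · simpa [hμ] using hdf x μ
  · simpa [hx] using hdf x μ

theorem IsDerivative.apply_eq_of_unique
    (huniq : ∀ df' : A → ΔA → ΔB, IsDerivative actA actB f df' → df' = df)
    (hdf : IsDerivative actA actB f df) {a : A} {δ : ΔA} {v : ΔB}
    (hv : f (actA a δ) = actB (f a) v) : df a δ = v := by
  classical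
  simpa using congr_fun₂ (huniq _ (hdf.update hv)).symm a δ

end

/-- If `f` is differentiable and `df` is its unique derivative, then `df` is regular. -/
theorem unique_derivative_regular {A ΔA B ΔB : Type*}
    [AddMonoid ΔA] [AddMonoid ΔB]
    (actA : A → ΔA → A) (actB : B → ΔB → B)
    (hA : IsChangeAction actA) (hB : IsChangeAction actB)
    (f : A → B) (df : A → ΔA → ΔB)
    (hdf : IsDerivative actA actB f df)
    (huniq : ∀ df' : A → ΔA → ΔB, IsDerivative actA actB f df' → df' = df) :
    IsRegularDerivative actA df := by
  refine ⟨fun a => hdf.apply_eq_of_unique huniq ?_,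
    fun a δ δ' => hdf.apply_eq_of_unique huniq ?_⟩
  · rw [hA.1, hB.1]
  · rw [hA.2, hdf, hdf, hB.2]
end

section
/- The chain rule preserves regularity: let A, B, C be change actions, and let df and dg be regular derivatives of f : A → B and g : B → C respectively. Then the chain-rule derivative of g ∘ f given by (a, δ) ↦ dg (f a) (df a δ) is a regular derivative of g ∘ f. -/
section Comp

variable {A ΔA B ΔB C ΔC : Type*} [AddMonoid ΔA] [AddMonoid ΔB] [AddMonoid ΔC]
  {actA : A → ΔA → A} {actB : B → ΔB → B} {actC : C → ΔC → C}
  {f : A → B} {g : B → C} {df : A → ΔA → ΔB} {dg : B → ΔB → ΔC}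

theorem IsDerivative.comp (hdg : IsDerivative actB actC g dg)
    (hdf : IsDerivative actA actB f df) :
    IsDerivative actA actC (g ∘ f) (fun a δ => dg (f a) (df a δ)) := fun a δ => by
  rw [Function.comp_apply, hdf a δ, hdg, Function.comp_apply]

/-- The derivative property of `df` rewrites `f a ⊕ df a δ` as `f (a ⊕ δ)`, which is exactly
the base point at which the regularity of `dg` evaluates the second summand. -/
theorem IsRegularDerivative.comp (hrg : IsRegularDerivative actB dg)
    (hdf : IsDerivative actA actB f df) (hrf : IsRegularDerivative actA df) :
    IsRegularDerivative actA (fun a δ => dg (f a) (df a δ)) := by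
  refine ⟨fun a => by simp only [hrf.1, hrg.1], fun a δ δ' => ?_⟩
  simp only [hrf.2, hrg.2, hdf a δ]

end Comp

theorem chain_rule_regular_general {A ΔA B ΔB C ΔC : Type*}
    [AddMonoid ΔA] [AddMonoid ΔB] [AddMonoid ΔC]
    (actA : A → ΔA → A) (actB : B → ΔB → B) (actC : C → ΔC → C)
    (f : A → B) (g : B → C) (df : A → ΔA → ΔB) (dg : B → ΔB → ΔC)
    (hdf : IsDerivative actA actB f df) (hrf : IsRegularDerivative actA df)
    (hdg : IsDerivative actB actC g dg) (hrg : IsRegularDerivative actB dg) :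
    IsDerivative actA actC (g ∘ f) (fun a δ => dg (f a) (df a δ)) ∧
    IsRegularDerivative actA (fun a δ => dg (f a) (df a δ)) :=
  ⟨hdg.comp hdf, hrg.comp hdf hrf⟩

/-- The chain rule preserves regularity. -/
theorem chain_rule_regular {A ΔA B ΔB C ΔC : Type*}
    [AddMonoid ΔA] [AddMonoid ΔB] [AddMonoid ΔC]
    (actA : A → ΔA → A) (actB : B → ΔB → B) (actC : C → ΔC → C)
    (hA : IsChangeAction actA) (hB : IsChangeAction actB) (hC : IsChangeAction actC)
    (f : A → B) (g : B → C) (df : A → ΔA → ΔB) (dg : B → ΔB → ΔC)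
    (hdf : IsDerivative actA actB f df) (hrf : IsRegularDerivative actA df)
    (hdg : IsDerivative actB actC g dg) (hrg : IsRegularDerivative actB dg) :
    IsDerivative actA actC (g ∘ f) (fun a δ => dg (f a) (df a δ)) ∧
    IsRegularDerivative actA (fun a δ => dg (f a) (df a δ)) :=
  chain_rule_regular_general actA actB actC f g df dg hdf hrf hdg hrg
end

section
/- A function f : A → B between (the carriers of) change actions is differentiable if and only if it is monotone with respect to the reachability preorders, i.e. for all a, a' : A, if there exists δ : ΔA with a ⊕ δ = a', then there exists ε : ΔB with f a ⊕ ε = f a'. (The forward direction is direct; the converse uses the axiom of choice to assemble a derivative.) -/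
theorem exists_isDerivative_iff {A ΔA B ΔB : Type*} [AddMonoid ΔA] [AddMonoid ΔB]
    (actA : A → ΔA → A) (actB : B → ΔB → B) (f : A → B) :
    (∃ df : A → ΔA → ΔB, IsDerivative actA actB f df) ↔
      ∀ a δ, ∃ ε : ΔB, f (actA a δ) = actB (f a) ε := by
  simp only [IsDerivative, Classical.skolem]

theorem differentiable_iff_monotone_general {A ΔA B ΔB : Type*}
    [AddMonoid ΔA] [AddMonoid ΔB]
    (actA : A → ΔA → A) (actB : B → ΔB → B)
    (f : A → B) :
    (∃ df : A → ΔA → ΔB, IsDerivative actA actB f df) ↔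
      ∀ a a' : A, (∃ δ : ΔA, actA a δ = a') → ∃ ε : ΔB, actB (f a) ε = f a' := by
  rw [exists_isDerivative_iff]
  simp only [forall_exists_index, forall_apply_eq_imp_iff]
  exact forall₂_congr fun _ _ => exists_congr fun _ => eq_comm

/-- A function between change actions is differentiable iff it is monotone with
respect to the reachability preorders. -/
theorem differentiable_iff_monotone {A ΔA B ΔB : Type*}
    [AddMonoid ΔA] [AddMonoid ΔB]
    (actA : A → ΔA → A) (actB : B → ΔB → B)
    (hA : IsChangeAction actA) (hB : IsChangeAction actB)
    (f : A → B) :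
    (∃ df : A → ΔA → ΔB, IsDerivative actA actB f df) ↔
      ∀ a a' : A, (∃ δ : ΔA, actA a δ = a') → ∃ ε : ΔB, actB (f a) ε = f a' :=
  differentiable_iff_monotone_general actA actB f
end

section
/- Partial derivatives: let A, B, C be change actions and give A × B the product change action structure (change monoid ΔA × ΔB componentwise, action (a, b) ⊕ (δa, δb) = (a ⊕ δa, b ⊕ δb)). If df is a regular derivative of f : A × B → C, then for all a : A, b : B, δa : ΔA, δb : ΔB: df ((a, b), (δa, δb)) = df ((a, b), (δa, 0)) + df ((a ⊕ δa, b), (0, δb)). -/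
/-- The componentwise change action on a product. -/
def prodAct {A ΔA B ΔB : Type*} (actA : A → ΔA → A) (actB : B → ΔB → B) :
    A × B → ΔA × ΔB → A × B :=
  fun p δ => (actA p.1 δ.1, actB p.2 δ.2)

theorem prodAct_zero_right {A ΔA B ΔB : Type*} [Zero ΔB]
    (actA : A → ΔA → A) (actB : B → ΔB → B) (hB : ∀ b, actB b 0 = b)
    (a : A) (b : B) (δa : ΔA) :
    prodAct actA actB (a, b) (δa, 0) = (actA a δa, b) := by
  simp only [prodAct, hB]

theorem partial_derivatives_general {A ΔA B ΔB ΔC : Type*}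
    [AddMonoid ΔA] [AddMonoid ΔB] [AddMonoid ΔC]
    (actA : A → ΔA → A) (actB : B → ΔB → B)
    (hB : IsChangeAction actB)
    (df : A × B → ΔA × ΔB → ΔC)
    (hreg : IsRegularDerivative (prodAct actA actB) df) :
    ∀ (a : A) (b : B) (δa : ΔA) (δb : ΔB),
      df (a, b) (δa, δb) = df (a, b) (δa, 0) + df (actA a δa, b) (0, δb) := by
  intro a b δa δb
  calc df (a, b) (δa, δb) = df (a, b) ((δa, 0) + (0, δb)) := by
        rw [Prod.mk_add_mk, add_zero, zero_add]
    _ = df (a, b) (δa, 0) + df (prodAct actA actB (a, b) (δa, 0)) (0, δb) := hreg.2 _ _ _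
    _ = df (a, b) (δa, 0) + df (actA a δa, b) (0, δb) := by
      rw [prodAct_zero_right actA actB hB.1]

/-- Partial derivatives: a regular derivative of `f : A × B → C` is the sum of
its two partial derivatives. -/
theorem partial_derivatives {A ΔA B ΔB C ΔC : Type*}
    [AddMonoid ΔA] [AddMonoid ΔB] [AddMonoid ΔC]
    (actA : A → ΔA → A) (actB : B → ΔB → B) (actC : C → ΔC → C)
    (hA : IsChangeAction actA) (hB : IsChangeAction actB) (hC : IsChangeAction actC)
    (f : A × B → C) (df : A × B → ΔA × ΔB → ΔC)
    (hdf : IsDerivative (prodAct actA actB) actC f df)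
    (hreg : IsRegularDerivative (prodAct actA actB) df) :
    ∀ (a : A) (b : B) (δa : ΔA) (δb : ΔB),
      df (a, b) (δa, δb) = df (a, b) (δa, 0) + df (actA a δa, b) (0, δb) :=
  partial_derivatives_general actA actB hB df hreg
end

section
/- Coproducts of change actions: let A, B, C be change actions. (1) The structure on the sum type A ⊕ B with change monoid ΔA × ΔB (componentwise addition and zero) and action (inl a) ⊕ (δa, δb) = inl (a ⊕ δa), (inr b) ⊕ (δa, δb) = inr (b ⊕ δb) is a change action. (2) The injections inl : A → A ⊕ B and inr : B → A ⊕ B have regular derivatives (a, δa) ↦ (δa, 0) and (b, δb) ↦ (0, δb) respectively. (3) If f₁ : A → C and f₂ : B → C have regular derivatives df₁ and df₂, then the copairing Sum.elim f₁ f₂ has a regular derivative dh given by dh (inl a) (δa, δb) = df₁ a δa and dh (inr b) (δa, δb) = df₂ b δb. -/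
/-- The change action on the sum type `A ⊕ B` with change monoid `ΔA × ΔB`. -/
def sumAct {A ΔA B ΔB : Type*} (actA : A → ΔA → A) (actB : B → ΔB → B) :
    A ⊕ B → ΔA × ΔB → A ⊕ B
  | Sum.inl a, δ => Sum.inl (actA a δ.1)
  | Sum.inr b, δ => Sum.inr (actB b δ.2)

section Sum

variable {A ΔA B ΔB C ΔC : Type*} {actA : A → ΔA → A} {actB : B → ΔB → B}

@[simp]
lemma sumAct_inl (a : A) (δ : ΔA × ΔB) :
    sumAct actA actB (Sum.inl a) δ = Sum.inl (actA a δ.1) := rfl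

@[simp]
lemma sumAct_inr (b : B) (δ : ΔA × ΔB) :
    sumAct actA actB (Sum.inr b) δ = Sum.inr (actB b δ.2) := rfl

variable [AddMonoid ΔA] [AddMonoid ΔB] [AddMonoid ΔC] {actC : C → ΔC → C}

lemma IsChangeAction.sumAct (hA : IsChangeAction actA) (hB : IsChangeAction actB) :
    IsChangeAction (sumAct actA actB) := by
  constructor
  · rintro (a | b)
    · simp [hA.1 a]
    · simp [hB.1 b]
  · rintro (a | b) δ δ'
    · simp [hA.2]
    · simp [hB.2]

lemma isDerivative_inl :
    IsDerivative actA (sumAct actA actB) Sum.inl (fun _ δa => ((δa, 0) : ΔA × ΔB)) :=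
  fun _ _ => rfl

lemma isDerivative_inr :
    IsDerivative actB (sumAct actA actB) Sum.inr (fun _ δb => ((0, δb) : ΔA × ΔB)) :=
  fun _ _ => rfl

lemma isRegularDerivative_const_addMonoidHom (g : ΔA →+ ΔB) :
    IsRegularDerivative actA (fun _ => g) :=
  ⟨fun _ => map_zero g, fun _ δ δ' => map_add g δ δ'⟩

lemma IsDerivative.sumElim {f₁ : A → C} {f₂ : B → C} {df₁ : A → ΔA → ΔC}
    {df₂ : B → ΔB → ΔC} (h₁ : IsDerivative actA actC f₁ df₁)
    (h₂ : IsDerivative actB actC f₂ df₂) :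
    IsDerivative (sumAct actA actB) actC (Sum.elim f₁ f₂)
      (fun s δ => Sum.elim (fun a => df₁ a δ.1) (fun b => df₂ b δ.2) s) := by
  rintro (a | b) δ
  · exact h₁ a δ.1
  · exact h₂ b δ.2

lemma IsRegularDerivative.sumElim {df₁ : A → ΔA → ΔC} {df₂ : B → ΔB → ΔC}
    (hr₁ : IsRegularDerivative actA df₁) (hr₂ : IsRegularDerivative actB df₂) :
    IsRegularDerivative (sumAct actA actB)
      (fun s δ => Sum.elim (fun a => df₁ a δ.1) (fun b => df₂ b δ.2) s) := by
  constructor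
  · rintro (a | b)
    · exact hr₁.1 a
    · exact hr₂.1 b
  · rintro (a | b) δ δ'
    · exact hr₁.2 a δ.1 δ'.1
    · exact hr₂.2 b δ.2 δ'.2

end Sum

theorem coproduct_change_action_general {A ΔA B ΔB C ΔC : Type*}
    [AddMonoid ΔA] [AddMonoid ΔB] [AddMonoid ΔC]
    (actA : A → ΔA → A) (actB : B → ΔB → B) (actC : C → ΔC → C)
    (hA : IsChangeAction actA) (hB : IsChangeAction actB)
    (f₁ : A → C) (f₂ : B → C) (df₁ : A → ΔA → ΔC) (df₂ : B → ΔB → ΔC)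
    (h₁ : IsDerivative actA actC f₁ df₁) (hr₁ : IsRegularDerivative actA df₁)
    (h₂ : IsDerivative actB actC f₂ df₂) (hr₂ : IsRegularDerivative actB df₂) :
    IsChangeAction (sumAct actA actB) ∧
    (IsDerivative actA (sumAct actA actB) Sum.inl (fun _ δa => ((δa, 0) : ΔA × ΔB)) ∧
      IsRegularDerivative actA (fun (_ : A) (δa : ΔA) => ((δa, 0) : ΔA × ΔB))) ∧
    (IsDerivative actB (sumAct actA actB) Sum.inr (fun _ δb => ((0, δb) : ΔA × ΔB)) ∧
      IsRegularDerivative actB (fun (_ : B) (δb : ΔB) => ((0, δb) : ΔA × ΔB))) ∧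
    (IsDerivative (sumAct actA actB) actC (Sum.elim f₁ f₂)
        (fun s δ => Sum.elim (fun a => df₁ a δ.1) (fun b => df₂ b δ.2) s) ∧
      IsRegularDerivative (sumAct actA actB)
        (fun (s : A ⊕ B) (δ : ΔA × ΔB) =>
          Sum.elim (fun a => df₁ a δ.1) (fun b => df₂ b δ.2) s)) :=
  ⟨hA.sumAct hB,
    ⟨isDerivative_inl, isRegularDerivative_const_addMonoidHom (AddMonoidHom.inl ΔA ΔB)⟩,
    ⟨isDerivative_inr, isRegularDerivative_const_addMonoidHom (AddMonoidHom.inr ΔA ΔB)⟩,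
    h₁.sumElim h₂, hr₁.sumElim hr₂⟩

/-- Coproducts of change actions: (1) `sumAct` is a change action on `A ⊕ B` with
change monoid `ΔA × ΔB`; (2) the injections have regular derivatives
`(a, δa) ↦ (δa, 0)` and `(b, δb) ↦ (0, δb)`; (3) the copairing of maps with
regular derivatives has a regular derivative given by case analysis. -/
theorem coproduct_change_action {A ΔA B ΔB C ΔC : Type*}
    [AddMonoid ΔA] [AddMonoid ΔB] [AddMonoid ΔC]
    (actA : A → ΔA → A) (actB : B → ΔB → B) (actC : C → ΔC → C)
    (hA : IsChangeAction actA) (hB : IsChangeAction actB) (hC : IsChangeAction actC)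
    (f₁ : A → C) (f₂ : B → C) (df₁ : A → ΔA → ΔC) (df₂ : B → ΔB → ΔC)
    (h₁ : IsDerivative actA actC f₁ df₁) (hr₁ : IsRegularDerivative actA df₁)
    (h₂ : IsDerivative actB actC f₂ df₂) (hr₂ : IsRegularDerivative actB df₂) :
    IsChangeAction (sumAct actA actB) ∧
    (IsDerivative actA (sumAct actA actB) Sum.inl (fun _ δa => ((δa, 0) : ΔA × ΔB)) ∧
      IsRegularDerivative actA (fun (_ : A) (δa : ΔA) => ((δa, 0) : ΔA × ΔB))) ∧
    (IsDerivative actB (sumAct actA actB) Sum.inr (fun _ δb => ((0, δb) : ΔA × ΔB)) ∧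
      IsRegularDerivative actB (fun (_ : B) (δb : ΔB) => ((0, δb) : ΔA × ΔB))) ∧
    (IsDerivative (sumAct actA actB) actC (Sum.elim f₁ f₂)
        (fun s δ => Sum.elim (fun a => df₁ a δ.1) (fun b => df₂ b δ.2) s) ∧
      IsRegularDerivative (sumAct actA actB)
        (fun (s : A ⊕ B) (δ : ΔA × ΔB) =>
          Sum.elim (fun a => df₁ a δ.1) (fun b => df₂ b δ.2) s)) :=
  coproduct_change_action_general actA actB actC hA hB f₁ f₂ df₁ df₂ h₁ hr₁ h₂ hr₂
end

section
/- Stability is preserved by the chain rule: let A, B, C be change actions, let df be a stable derivative of f : A → B, and let dg be a stable derivative of g : B → C. Then the chain-rule derivative of g ∘ f, given by d(g∘f) a δ = dg (f a) (df a δ), is stable: dg (f (a ⊕ δ)) (df (a ⊕ δ) δ') = dg (f a) (df a δ') for all a : A and δ, δ' : ΔA. -/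
/-- `df` is stable: changes to the base point do not affect its value. -/
def IsStable {A ΔA ΔB : Type*} (actA : A → ΔA → A) (df : A → ΔA → ΔB) : Prop :=
  ∀ (a : A) (δ δ' : ΔA), df (actA a δ) δ' = df a δ'

theorem IsStable.apply_derivative_act {A ΔA B ΔB ΔC : Type*} [AddMonoid ΔA] [AddMonoid ΔB]
    {actA : A → ΔA → A} {actB : B → ΔB → B} {f : A → B} {df : A → ΔA → ΔB}
    {dg : B → ΔB → ΔC} (hsg : IsStable actB dg) (hdf : IsDerivative actA actB f df)
    (a : A) (δ : ΔA) : dg (f (actA a δ)) = dg (f a) := by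
  funext δ'
  rw [hdf, hsg]

theorem chain_rule_stable_general {A ΔA B ΔB ΔC : Type*}
    [AddMonoid ΔA] [AddMonoid ΔB]
    (actA : A → ΔA → A) (actB : B → ΔB → B)
    (f : A → B) (df : A → ΔA → ΔB) (dg : B → ΔB → ΔC)
    (hdf : IsDerivative actA actB f df) (hsf : IsStable actA df)
    (hsg : IsStable actB dg) :
    IsStable actA (fun a δ => dg (f a) (df a δ)) := by
  intro a δ δ'
  show dg (f (actA a δ)) (df (actA a δ) δ') = dg (f a) (df a δ')
  rw [hsg.apply_derivative_act hdf, hsf]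

/-- Stability is preserved by the chain rule. -/
theorem chain_rule_stable {A ΔA B ΔB C ΔC : Type*}
    [AddMonoid ΔA] [AddMonoid ΔB] [AddMonoid ΔC]
    (actA : A → ΔA → A) (actB : B → ΔB → B) (actC : C → ΔC → C)
    (hA : IsChangeAction actA) (hB : IsChangeAction actB) (hC : IsChangeAction actC)
    (f : A → B) (g : B → C) (df : A → ΔA → ΔB) (dg : B → ΔB → ΔC)
    (hdf : IsDerivative actA actB f df) (hsf : IsStable actA df)
    (hdg : IsDerivative actB actC g dg) (hsg : IsStable actB dg) :
    IsStable actA (fun a δ => dg (f a) (df a δ)) :=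
  chain_rule_stable_general actA actB f df dg hdf hsf hsg
end

section
/- Regularity of derivatives of star monomials over a commutative Kleene algebra: let K be a Kleene algebra in which multiplication is commutative. For the polynomial p(x) = (x^(n+1) · c)∗ with derivative ∂p/∂x (x) = (x^(n+1) · c)∗ · (x^n · c), the regularity equation holds: for all n : ℕ and u, a, b, c : K, ((u+a+b)^(n+1) · c)∗ · ((u+a+b)^n · c) · (a + b) = ((u+a)^(n+1) · c)∗ · ((u+a)^n · c) · a + ((u+a+b)^(n+1) · c)∗ · ((u+a+b)^n · c) · b. -/
/-!
Put `s = u + a` and `t = s + b`. In a commutative idempotent semiring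
`t ^ (k + 1) = s ^ (k + 1) + b * t ^ k`, so `z = t ^ (n + 1) * c` splits as `w + v` with
`w = s ^ (n + 1) * c` and `v = b * (t ^ n * c)`, and likewise the left-hand side is
`z∗ * (x + v)` with `x = s ^ n * c * a ≤ z`. The theorem is then the star identity
`(w + v)∗ * (x + v) = w∗ * x + (w + v)∗ * v` for `x ≤ w + v`, proved by star induction.
-/

open scoped Computability

namespace Commute

variable {K : Type*} [IdemSemiring K] {s b : K}

theorem add_pow_succ_idem (h : Commute s b) (k : ℕ) :
    (s + b) ^ (k + 1) = s ^ (k + 1) + b * (s + b) ^ k := by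
  induction k with
  | zero => simp
  | succ k ih =>
    have hle : s * b * (s + b) ^ k ≤ b * (s + b) ^ (k + 1) := by
      rw [h.eq, mul_assoc, pow_succ' _ k]
      gcongr
      exact le_self_add
    calc (s + b) ^ (k + 2) = s * (s + b) ^ (k + 1) + b * (s + b) ^ (k + 1) := by
          rw [pow_succ' _ (k + 1), add_mul]
      _ = s ^ (k + 2) + s * b * (s + b) ^ k + b * (s + b) ^ (k + 1) := by
          rw [ih, mul_add, ← pow_succ', mul_assoc]
      _ = s ^ (k + 2) + b * (s + b) ^ (k + 1) := by
          rw [add_assoc, add_eq_right_iff_le.2 hle]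

theorem add_pow_mul_add_eq {a : K} (h : Commute s b) (ha : a ≤ s + b) :
    ∀ n : ℕ, (s + b) ^ n * a + b * (s + b) ^ n = s ^ n * a + b * (s + b) ^ n
  | 0 => by simp
  | k + 1 => by
    have hle : b * (s + b) ^ k * a ≤ b * (s + b) ^ (k + 1) := by
      rw [mul_assoc, pow_succ]
      gcongr
    nth_rw 1 [h.add_pow_succ_idem]
    rw [add_mul, add_assoc, add_eq_right_iff_le.2 hle]

end Commute

section

variable {K : Type*} [KleeneAlgebra K]

theorem kstar_add_mul_add_eq {w v x : K} (hv : Commute v (w∗ * x)) (hx : x ≤ w + v) :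
    (w + v)∗ * (x + v) = w∗ * x + (w + v)∗ * v := by
  have hw : w ≤ w + v := le_self_add
  refine le_antisymm (kstar_mul_le (add_le_add ?_ ?_) ?_) (add_le ?_ ?_)
  · exact le_mul_of_one_le_left' one_le_kstar
  · exact le_mul_of_one_le_left' one_le_kstar
  · rw [mul_add, add_mul]
    refine add_le (add_le ?_ ?_) ?_
    · grw [← mul_assoc, mul_kstar_le_kstar]
      exact le_self_add
    · calc v * (w∗ * x) = w∗ * x * v := hv.eq
        _ ≤ (w + v)∗ * (w + v) * v := by grw [hw, hx]
        _ ≤ w∗ * x + (w + v)∗ * v := by grw [kstar_mul_le_kstar]; exact le_add_self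
    · grw [← mul_assoc, mul_kstar_le_kstar]; exact le_add_self
  · grw [hw]; gcongr; exact le_self_add
  · gcongr; exact le_add_self

end

/-- Regularity of derivatives of star monomials over a commutative Kleene algebra. -/
theorem kleene_star_monomial_regular {K : Type*} [KleeneAlgebra K]
    (hcomm : ∀ a b : K, a * b = b * a) (n : ℕ) (u a b c : K) :
    ((u + a + b) ^ (n + 1) * c)∗ * ((u + a + b) ^ n * c) * (a + b) =
      ((u + a) ^ (n + 1) * c)∗ * ((u + a) ^ n * c) * a +
        ((u + a + b) ^ (n + 1) * c)∗ * ((u + a + b) ^ n * c) * b := by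
  let _ : CommSemiring K := { ‹KleeneAlgebra K› with mul_comm := hcomm }
  set s := u + a
  set t := s + b
  have hsb : Commute s b := hcomm s b
  have hst : s ≤ t := le_self_add
  have hat : a ≤ t := le_add_self.trans hst
  have hz : t ^ (n + 1) * c = s ^ (n + 1) * c + b * (t ^ n * c) := by
    rw [hsb.add_pow_succ_idem, add_mul, mul_assoc]
  have hx : s ^ n * c * a ≤ t ^ (n + 1) * c :=
    calc s ^ n * c * a = s ^ n * a * c := by ring
      _ ≤ t ^ n * t * c := by gcongr
      _ = t ^ (n + 1) * c := by ring
  have ha : t ^ n * c * a + b * (t ^ n * c) = s ^ n * c * a + b * (t ^ n * c) :=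
    calc _ = (t ^ n * a + b * t ^ n) * c := by ring
      _ = (s ^ n * a + b * t ^ n) * c := by rw [hsb.add_pow_mul_add_eq hat]
      _ = _ := by ring
  calc (t ^ (n + 1) * c)∗ * (t ^ n * c) * (a + b)
      = (t ^ (n + 1) * c)∗ * (t ^ n * c * a + b * (t ^ n * c)) := by ring
    _ = (t ^ (n + 1) * c)∗ * (s ^ n * c * a + b * (t ^ n * c)) := by rw [ha]
    _ = (s ^ (n + 1) * c)∗ * (s ^ n * c * a) + (t ^ (n + 1) * c)∗ * (b * (t ^ n * c)) := by
      rw [hz] at hx ⊢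
      exact kstar_add_mul_add_eq (hcomm _ _) hx
    _ = _ := by ring
end

section
/- Vertical composition of 2-cells between differential maps: let A, B be change actions, let f, g, h : A → B have regular derivatives df, dg, dh respectively, let U : A → ΔB be a 2-cell from (f, df) to (g, dg), and let V : A → ΔB be a 2-cell from (g, dg) to (h, dh). Then the function a ↦ U a + V a is a 2-cell from (f, df) to (h, dh): h a = f a ⊕ (U a + V a) for all a, and df a δ + (U (a ⊕ δ) + V (a ⊕ δ)) = (U a + V a) + dh a δ for all a, δ. -/
/-- `U` is a 2-cell from `(f, df)` to `(g, dg)`. -/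
def Is2Cell {A ΔA B ΔB : Type*} [AddMonoid ΔB]
    (actA : A → ΔA → A) (actB : B → ΔB → B)
    (f g : A → B) (df dg : A → ΔA → ΔB) (U : A → ΔB) : Prop :=
  (∀ a, g a = actB (f a) (U a)) ∧
  ∀ (a : A) (δ : ΔA), df a δ + U (actA a δ) = U a + dg a δ

/-- Pasting two naturality squares side by side: the naturality law of a vertical composite. -/
theorem add_add_eq_add_add_of_add_eq_add {M : Type*} [AddSemigroup M] {x y z u u' v v' : M}
    (hu : x + u' = u + y) (hv : y + v' = v + z) : x + (u' + v') = u + v + z := by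
  rw [← add_assoc, hu, add_assoc u, hv, ← add_assoc]

theorem vertical_composition_2cells_general {A ΔA B ΔB : Type*}
    [AddMonoid ΔB]
    (actA : A → ΔA → A) (actB : B → ΔB → B)
    (hB : IsChangeAction actB)
    (f g h : A → B) (df dg dh : A → ΔA → ΔB)
    (U V : A → ΔB)
    (hU : Is2Cell actA actB f g df dg U)
    (hV : Is2Cell actA actB g h dg dh V) :
    Is2Cell actA actB f h df dh (fun a => U a + V a) :=
  ⟨fun a => by rw [hV.1, hU.1, hB.2],
    fun a δ => add_add_eq_add_add_of_add_eq_add (hU.2 a δ) (hV.2 a δ)⟩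

/-- Vertical composition of 2-cells between differential maps. -/
theorem vertical_composition_2cells {A ΔA B ΔB : Type*}
    [AddMonoid ΔA] [AddMonoid ΔB]
    (actA : A → ΔA → A) (actB : B → ΔB → B)
    (hA : IsChangeAction actA) (hB : IsChangeAction actB)
    (f g h : A → B) (df dg dh : A → ΔA → ΔB)
    (hdf : IsDerivative actA actB f df) (hrf : IsRegularDerivative actA df)
    (hdg : IsDerivative actA actB g dg) (hrg : IsRegularDerivative actA dg)
    (hdh : IsDerivative actA actB h dh) (hrh : IsRegularDerivative actA dh)
    (U V : A → ΔB)
    (hU : Is2Cell actA actB f g df dg U)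
    (hV : Is2Cell actA actB g h dg dh V) :
    Is2Cell actA actB f h df dh (fun a => U a + V a) :=
  vertical_composition_2cells_general actA actB hB f g h df dg dh U V hU hV
end

section
/- Horizontal composition of 2-cells between differential maps: let A, B, C be change actions; let f₁, f₂ : A → B have regular derivatives df₁, df₂ and let U be a 2-cell from (f₁, df₁) to (f₂, df₂); let g₁, g₂ : B → C have regular derivatives dg₁, dg₂ and let V be a 2-cell from (g₁, dg₁) to (g₂, dg₂). Then W : A → ΔC defined by W a = dg₁ (f₁ a) (U a) + V (f₂ a) is a 2-cell from (g₁ ∘ f₁, d(g₁∘f₁)) to (g₂ ∘ f₂, d(g₂∘f₂)), where d(gᵢ∘fᵢ) a δ = dgᵢ (fᵢ a) (dfᵢ a δ): that is, g₂ (f₂ a) = g₁ (f₁ a) ⊕ W a for all a, and dg₁ (f₁ a) (df₁ a δ) + W (a ⊕ δ) = W a + dg₂ (f₂ a) (df₂ a δ) for all a, δ. -/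
/-!
The composite 2-cell `W` is the vertical composite of two whiskerings, `U ▷ g₁` followed by
`f₂ ◁ V` (names in the diagrammatic order of Mathlib's bicategories, where `g ∘ f` is `f ≫ g`).
Naturality of `U ▷ g₁` comes from the naturality square of `U` by applying `dg₁ (f₁ a)` to both
sides and splitting each with the additivity rule of the regular derivative `dg₁`.
-/

namespace Is2Cell

variable {A ΔA B ΔB C ΔC : Type*} [AddMonoid ΔB] [AddMonoid ΔC]
  {actA : A → ΔA → A} {actB : B → ΔB → B} {actC : C → ΔC → C}

theorem vcomp {f g h : A → B} {df dg dh : A → ΔA → ΔB} {U U' : A → ΔB}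
    (hB : IsChangeAction actB) (hU : Is2Cell actA actB f g df dg U)
    (hU' : Is2Cell actA actB g h dg dh U') :
    Is2Cell actA actB f h df dh (fun a => U a + U' a) := by
  refine ⟨fun a => by rw [hU'.1, hU.1, hB.2], fun a δ => ?_⟩
  rw [← add_assoc, hU.2, add_assoc, hU'.2, add_assoc]

variable [AddMonoid ΔA]

theorem whiskerLeft {f : A → B} {df : A → ΔA → ΔB} {g₁ g₂ : B → C} {dg₁ dg₂ : B → ΔB → ΔC}
    {V : B → ΔC} (hdf : IsDerivative actA actB f df) (hV : Is2Cell actB actC g₁ g₂ dg₁ dg₂ V) :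
    Is2Cell actA actC (g₁ ∘ f) (g₂ ∘ f) (fun a δ => dg₁ (f a) (df a δ))
      (fun a δ => dg₂ (f a) (df a δ)) (fun a => V (f a)) := by
  refine ⟨fun a => hV.1 (f a), fun a δ => ?_⟩
  simp only [hdf a δ, hV.2]

theorem whiskerRight {f₁ f₂ : A → B} {df₁ df₂ : A → ΔA → ΔB} {g : B → C} {dg : B → ΔB → ΔC}
    {U : A → ΔB} (hU : Is2Cell actA actB f₁ f₂ df₁ df₂ U) (hdf₁ : IsDerivative actA actB f₁ df₁)
    (hdg : IsDerivative actB actC g dg) (hrg : IsRegularDerivative actB dg) :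
    Is2Cell actA actC (g ∘ f₁) (g ∘ f₂) (fun a δ => dg (f₁ a) (df₁ a δ))
      (fun a δ => dg (f₂ a) (df₂ a δ)) (fun a => dg (f₁ a) (U a)) := by
  refine ⟨fun a => by rw [Function.comp_apply, Function.comp_apply, hU.1 a, hdg], fun a δ => ?_⟩
  calc dg (f₁ a) (df₁ a δ) + dg (f₁ (actA a δ)) (U (actA a δ))
      = dg (f₁ a) (df₁ a δ + U (actA a δ)) := by rw [hrg.2, hdf₁]
    _ = dg (f₁ a) (U a + df₂ a δ) := by rw [hU.2]
    _ = dg (f₁ a) (U a) + dg (f₂ a) (df₂ a δ) := by rw [hrg.2, ← hU.1]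

end Is2Cell

theorem horizontal_composition_2cells_general {A ΔA B ΔB C ΔC : Type*}
    [AddMonoid ΔA] [AddMonoid ΔB] [AddMonoid ΔC]
    (actA : A → ΔA → A) (actB : B → ΔB → B) (actC : C → ΔC → C)
    (hC : IsChangeAction actC)
    (f₁ f₂ : A → B) (df₁ df₂ : A → ΔA → ΔB)
    (hdf₁ : IsDerivative actA actB f₁ df₁)
    (hdf₂ : IsDerivative actA actB f₂ df₂)
    (g₁ g₂ : B → C) (dg₁ dg₂ : B → ΔB → ΔC)
    (hdg₁ : IsDerivative actB actC g₁ dg₁) (hrg₁ : IsRegularDerivative actB dg₁)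
    (U : A → ΔB) (V : B → ΔC)
    (hU : Is2Cell actA actB f₁ f₂ df₁ df₂ U)
    (hV : Is2Cell actB actC g₁ g₂ dg₁ dg₂ V) :
    Is2Cell actA actC (g₁ ∘ f₁) (g₂ ∘ f₂)
      (fun a δ => dg₁ (f₁ a) (df₁ a δ)) (fun a δ => dg₂ (f₂ a) (df₂ a δ))
      (fun a => dg₁ (f₁ a) (U a) + V (f₂ a)) :=
  (hU.whiskerRight hdf₁ hdg₁ hrg₁).vcomp hC (hV.whiskerLeft hdf₂)

/-- Horizontal composition of 2-cells between differential maps. -/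
theorem horizontal_composition_2cells {A ΔA B ΔB C ΔC : Type*}
    [AddMonoid ΔA] [AddMonoid ΔB] [AddMonoid ΔC]
    (actA : A → ΔA → A) (actB : B → ΔB → B) (actC : C → ΔC → C)
    (hA : IsChangeAction actA) (hB : IsChangeAction actB) (hC : IsChangeAction actC)
    (f₁ f₂ : A → B) (df₁ df₂ : A → ΔA → ΔB)
    (hdf₁ : IsDerivative actA actB f₁ df₁) (hrf₁ : IsRegularDerivative actA df₁)
    (hdf₂ : IsDerivative actA actB f₂ df₂) (hrf₂ : IsRegularDerivative actA df₂)
    (g₁ g₂ : B → C) (dg₁ dg₂ : B → ΔB → ΔC)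
    (hdg₁ : IsDerivative actB actC g₁ dg₁) (hrg₁ : IsRegularDerivative actB dg₁)
    (hdg₂ : IsDerivative actB actC g₂ dg₂) (hrg₂ : IsRegularDerivative actB dg₂)
    (U : A → ΔB) (V : B → ΔC)
    (hU : Is2Cell actA actB f₁ f₂ df₁ df₂ U)
    (hV : Is2Cell actB actC g₁ g₂ dg₁ dg₂ V) :
    Is2Cell actA actC (g₁ ∘ f₁) (g₂ ∘ f₂)
      (fun a δ => dg₁ (f₁ a) (df₁ a δ)) (fun a δ => dg₂ (f₂ a) (df₂ a δ))
      (fun a => dg₁ (f₁ a) (U a) + V (f₂ a)) :=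
  horizontal_composition_2cells_general actA actB actC hC f₁ f₂ df₁ df₂ hdf₁ hdf₂ g₁ g₂ dg₁ dg₂ hdg₁
    hrg₁ U V hU hV
end

section
/- Identity laws for pre-ω-differential maps: for every pre-ω-differential map f : A ⇒ B between ω-sequences of types, Id_B ∘ f = f and f ∘ Id_A = f, where Id is the identity pre-ω-differential map and ∘ is composition of pre-ω-differential maps (equality means pointwise equality of the component functions at every index j). -/
universe u

/-- `DSeqAt A i n` is the `n`-th derivative space `(D (Πⁱ A))_n` of the `i`-fold
shift `Πⁱ A` of the ω-sequence of types `A` (where `(Π A)_k = A (k+1)`), so that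
`(D X)_0 = X 0` and `(D X)_{n+1} = (D X)_n × (D (Π X))_n`. -/
def DSeqAt (A : ℕ → Type u) : ℕ → ℕ → Type u
  | i, 0 => A i
  | i, n + 1 => DSeqAt A i n × DSeqAt A (i + 1) n

/-- A pre-ω-differential map `f : A ⇒ B` is a family of maps `f j : (D A)_j → B j`. -/
def PreOmegaMap (A B : ℕ → Type u) : Type u :=
  ∀ j, DSeqAt A 0 j → B j

/-- The structural map `e^j : (D (Πⁱ A))_{m+1} → (D (Πⁱ A))_m`, defined by
`e^0 = π₁` and `e^{j+1} = e^j × e^j` (meaningful for `j ≤ m`). -/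
def eMap (A : ℕ → Type u) : (i j m : ℕ) → DSeqAt A i (m + 1) → DSeqAt A i m
  | _, 0, _ => Prod.fst
  | _, _ + 1, 0 => Prod.fst
  | i, j + 1, m + 1 => fun p => (eMap A i j m p.1, eMap A (i + 1) j m p.2)

/-- The structural map `c^j : (D (Πⁱ A))_j → (Π^{i+j} A)_0 = A (i + j)` (the
instance `m = 0` of `c^j : (D (Πⁱ A))_{m+j} → (D (Π^{i+j} A))_m`), defined by
`c^0 = id` and `c^{j+1} = c^j ∘ π₂`. -/
def cMap (A : ℕ → Type u) : (i j : ℕ) → DSeqAt A i j → A (i + j)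
  | _, 0 => id
  | i, j + 1 => fun p => cast (congrArg A (Nat.succ_add i j)) (cMap A (i + 1) j p.2)

/-- The iterated derivative sequence: `DMap f n j` is `(Dⁿ f)_j : (D A)_{n+j} → (D (Πʲ B))_n`,
defined by `(D⁰ f)_j = f j` and `(D^{n+1} f)_j = ⟨(Dⁿ f)_j ∘ e^j, (Dⁿ f)_{j+1}⟩`. -/
def DMap {A B : ℕ → Type u} (f : PreOmegaMap A B) :
    (n j : ℕ) → DSeqAt A 0 (n + j) → DSeqAt B j n
  | 0, j => fun p => f j (cast (congrArg (DSeqAt A 0) (Nat.zero_add j)) p)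
  | n + 1, j => fun p =>
      let p' : DSeqAt A 0 (n + j + 1) :=
        cast (congrArg (DSeqAt A 0) (Nat.succ_add n j)) p
      (DMap f n j (eMap A 0 j (n + j) p'), DMap f n (j + 1) p')

/-- Composition of pre-ω-differential maps: `(g ∘ f)_j = g_j ∘ (Dʲ f)_0`. -/
def compPre {A B C : ℕ → Type u} (g : PreOmegaMap B C) (f : PreOmegaMap A B) :
    PreOmegaMap A C :=
  fun j p => g j (DMap f j 0 p)

/-- The identity pre-ω-differential map: `Id_j = c^j`. -/
def idPre (A : ℕ → Type u) : PreOmegaMap A A :=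
  fun j p => cast (congrArg A (Nat.zero_add j)) (cMap A 0 j p)

/-!
Both laws follow from two computations of iterated derivatives. For the left law,
`c^n ∘ (Dⁿ f)_j = f_{n+j}`: the projection `c` picks the last component of `(Dⁿ f)_j`, which is
`f` itself at the shifted index. For the right law, `(Dⁿ Id)_j` is the general structural map
`c^j : (D A)_{n+j} → (D (Πʲ A))_n`, because `c^j` satisfies the same recursion
`c^j_{m+1} = ⟨c^j_m ∘ e^j, c^{j+1}_m⟩` as the derivatives of `Id`; at `j = 0` it is the identity.
-/

lemma Prod.mk_heq_mk {α α' β β' : Type u} {a : α} {a' : α'} {b : β} {b' : β'}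
    (ha : a ≍ a') (hb : b ≍ b') : (a, b) ≍ (a', b') := by
  cases ha; cases hb; rfl

lemma Prod.snd_heq_snd {α α' β β' : Type u} (hα : α = α') (hβ : β = β')
    {p : α × β} {q : α' × β'} (h : p ≍ q) : p.2 ≍ q.2 := by
  subst hα hβ; cases h; rfl

lemma apply_heq_apply {T S : ℕ → Type u} (g : ∀ n, T n → S n) {a b : ℕ} (h : a = b)
    {x : T a} {y : T b} (hxy : x ≍ y) : g a x ≍ g b y := by
  subst h; cases hxy; rfl

lemma cMap_DMap_heq {A B : ℕ → Type u} (f : PreOmegaMap A B) (n j : ℕ)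
    (p : DSeqAt A 0 (n + j)) : cMap B j n (DMap f n j p) ≍ f (n + j) p := by
  induction n generalizing j with
  | zero => exact (apply_heq_apply f (Nat.zero_add j) (cast_heq _ p).symm).symm
  | succ n ih =>
    refine (cast_heq _ _).trans ((ih (j + 1) _).trans ?_)
    exact apply_heq_apply f (Nat.succ_add_eq_add_succ n j).symm (cast_heq _ p)

/-- The iterated second projection `c^j : (D (Πⁱ A))_{m+j} → (D (Π^{i+j} A))_m`; `cMap` is its
instance `m = 0`. -/
def sndIter (A : ℕ → Type u) : (j i m : ℕ) → DSeqAt A i (m + j) → DSeqAt A (i + j) m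
  | 0, _, _ => id
  | j + 1, i, m => fun p =>
      cast (congrArg (fun k => DSeqAt A k m) (Nat.succ_add i j)) (sndIter A j (i + 1) m p.2)

lemma sndIter_zero_heq_cMap (A : ℕ → Type u) (j i : ℕ) {p : DSeqAt A i (0 + j)}
    {q : DSeqAt A i j} (h : p ≍ q) : sndIter A j i 0 p ≍ cMap A i j q := by
  induction j generalizing i with
  | zero => exact h
  | succ j ih =>
    refine (cast_heq _ _).trans ((ih (i + 1) ?_).trans (cast_heq _ _).symm)
    exact Prod.snd_heq_snd (congrArg (DSeqAt A i) (Nat.zero_add j))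
      (congrArg (DSeqAt A (i + 1)) (Nat.zero_add j)) h

lemma sndIter_succ_heq (A : ℕ → Type u) (j i m : ℕ) {p : DSeqAt A i (m + 1 + j)}
    {p' : DSeqAt A i (m + j + 1)} (h : p ≍ p') :
    sndIter A j i (m + 1) p ≍
      ((sndIter A j i m (eMap A i j (m + j) p'), sndIter A (j + 1) i m p') :
        DSeqAt A (i + j) m × DSeqAt A (i + j + 1) m) := by
  induction j generalizing i with
  | zero =>
    cases h
    exact Prod.mk_heq_mk HEq.rfl
      (cast_heq (congrArg (fun k => DSeqAt A k m) (Nat.succ_add i 0)) p.2).symm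
  | succ j ih =>
    have hsnd : p.2 ≍ p'.2 :=
      Prod.snd_heq_snd (congrArg (DSeqAt A i) (Nat.add_right_comm m 1 j))
        (congrArg (DSeqAt A (i + 1)) (Nat.add_right_comm m 1 j)) h
    refine (cast_heq _ _).trans ((ih (i + 1) hsnd).trans (Prod.mk_heq_mk ?_ ?_))
    · exact (cast_heq _ _).symm
    · exact (cast_heq _ _).symm

lemma DMap_idPre_heq_sndIter (A : ℕ → Type u) (n j : ℕ) (p : DSeqAt A 0 (n + j)) :
    DMap (idPre A) n j p ≍ sndIter A j 0 n p := by
  induction n generalizing j with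
  | zero => exact (cast_heq _ _).trans (sndIter_zero_heq_cMap A j 0 (cast_heq _ p).symm).symm
  | succ n ih =>
    have hp : p ≍ cast (congrArg (DSeqAt A 0) (Nat.succ_add n j)) p := (cast_heq _ p).symm
    refine HEq.trans ?_ (sndIter_succ_heq A j 0 n hp).symm
    exact Prod.mk_heq_mk (ih j _) (ih (j + 1) _)

/-- Identity laws for pre-ω-differential maps: `Id_B ∘ f = f` and `f ∘ Id_A = f`,
pointwise at every index `j`. -/
theorem preOmega_id_laws {A B : ℕ → Type u} (f : PreOmegaMap A B) :
    (∀ j, compPre (idPre B) f j = f j) ∧ (∀ j, compPre f (idPre A) j = f j) := by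
  constructor
  · intro j
    funext p
    exact eq_of_heq ((cast_heq _ _).trans (cMap_DMap_heq f j 0 p))
  · intro j
    funext p
    exact congrArg (f j) (eq_of_heq (DMap_idPre_heq_sndIter A j 0 p))
end

section
/- Associativity of composition of pre-ω-differential maps: for pre-ω-differential maps f : A ⇒ B, g : B ⇒ C, h : C ⇒ D between ω-sequences of types and every n : ℕ, ((h ∘ g) ∘ f)_n = (h ∘ (g ∘ f))_n, i.e. (h_n ∘ (D^n g)_0) ∘ (D^n f)_0 = h_n ∘ (D^n (g ∘ f))_0. -/
universe u

/-!
Associativity reduces to functoriality of the iterated derivative,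
`(Dⁿ (g ∘ f))_j = (Dⁿ g)_j ∘ (D^{n+j} f)_0`, proved by induction on `n`. Its inductive step
is the naturality `e^j ∘ (D^{m+1} f)_k = (D^m f)_k ∘ e^{k+j}` (for `j ≤ m`), itself an induction
on `j` resting on the simplicial identity `e^c ∘ e^b = e^b ∘ e^{c+1}` for `b ≤ c`.
-/

theorem map_cast {F G : ℕ → Type u} (φ : ∀ n, F n → G n) {a b : ℕ} (e : a = b) (x : F a) :
    φ b (cast (congrArg F e) x) = cast (congrArg G e) (φ a x) := by
  subst e
  rfl

section

variable {A B C : ℕ → Type u}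

theorem eMap_zero_right (i j : ℕ) (p : DSeqAt A i 1) : eMap A i j 0 p = p.1 := by
  cases j <;> rfl

theorem eMap_eMap : ∀ {b c : ℕ}, b ≤ c → ∀ (i m : ℕ) (p : DSeqAt A i (m + 2)),
    eMap A i c m (eMap A i b (m + 1) p) = eMap A i b m (eMap A i (c + 1) (m + 1) p)
  | 0, _, _, _, _, _ => rfl
  | _ + 1, _ + 1, _, _, 0, _ => by
      simp only [eMap, eMap_zero_right]
  | _ + 1, _ + 1, hbc, i, m + 1, p =>
      Prod.ext (eMap_eMap (Nat.le_of_succ_le_succ hbc) i m p.1)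
        (eMap_eMap (Nat.le_of_succ_le_succ hbc) (i + 1) m p.2)

theorem eMap_DMap (f : PreOmegaMap A B) {j m : ℕ} (hjm : j ≤ m) (k : ℕ)
    (p : DSeqAt A 0 (m + 1 + k)) :
    eMap B k j m (DMap f (m + 1) k p)
      = DMap f m k (eMap A 0 (k + j) (m + k)
          (cast (congrArg (DSeqAt A 0) (Nat.succ_add m k)) p)) := by
  induction j generalizing m k with
  | zero => rfl
  | succ j ih =>
    obtain ⟨m, rfl⟩ := Nat.exists_eq_add_one_of_ne_zero (Nat.ne_zero_of_lt hjm)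
    replace hjm := Nat.le_of_succ_le_succ hjm
    set p₁ : DSeqAt A 0 (m + 1 + k + 1) :=
      cast (congrArg (DSeqAt A 0) (Nat.succ_add (m + 1) k)) p
    refine Prod.ext ?_ ?_
    · change eMap B k j m (DMap f (m + 1) k (eMap A 0 k (m + 1 + k) p₁)) = DMap f m k
        (eMap A 0 k (m + k) (cast (congrArg (DSeqAt A 0) (Nat.succ_add m k))
          (eMap A 0 (k + j + 1) (m + 1 + k) p₁)))
      rw [ih hjm, ← map_cast (fun x => eMap A 0 k x) (Nat.succ_add m k),
        ← map_cast (fun x => eMap A 0 (k + j + 1) x) (Nat.succ_add m k)]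
      exact congrArg (DMap f m k) (eMap_eMap (Nat.le_add_right k j) 0 (m + k) _)
    · change eMap B (k + 1) j m (DMap f (m + 1) (k + 1) p₁) = DMap f m (k + 1)
        (cast (congrArg (DSeqAt A 0) (Nat.succ_add m k)) (eMap A 0 (k + j + 1) (m + 1 + k) p₁))
      rw [ih hjm, Nat.add_right_comm k 1 j,
        ← map_cast (fun x => eMap A 0 (k + j + 1) x) (Nat.succ_add m k)]
      rfl

theorem DMap_compPre (f : PreOmegaMap A B) (g : PreOmegaMap B C) (n : ℕ) :
    ∀ (j : ℕ) (p : DSeqAt A 0 (n + j)),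
      DMap (compPre g f) n j p = DMap g n j (DMap f (n + j) 0 p) := by
  induction n with
  | zero =>
    intro j p
    exact congrArg (g j) (map_cast (fun x => DMap f x 0) (Nat.zero_add j) p)
  | succ n ih =>
    intro j p
    set p₁ : DSeqAt A 0 (n + j + 1) := cast (congrArg (DSeqAt A 0) (Nat.succ_add n j)) p
    have hf : cast (congrArg (DSeqAt B 0) (Nat.succ_add n j)) (DMap f (n + 1 + j) 0 p)
        = DMap f (n + j + 1) 0 p₁ :=
      (map_cast (fun x => DMap f x 0) (Nat.succ_add n j) p).symm
    refine Prod.ext ?_ ?_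
    · change DMap (compPre g f) n j (eMap A 0 j (n + j) p₁)
        = DMap g n j (eMap B 0 j (n + j) _)
      rw [ih, hf, eMap_DMap f le_add_self 0, Nat.zero_add]
      rfl
    · exact (ih (j + 1) p₁).trans (congrArg (DMap g n (j + 1)) hf.symm)

end

/-- Associativity of composition of pre-ω-differential maps:
`((h ∘ g) ∘ f)_n = (h ∘ (g ∘ f))_n`, i.e.
`(h_n ∘ (Dⁿ g)_0) ∘ (Dⁿ f)_0 = h_n ∘ (Dⁿ (g ∘ f))_0`. -/
theorem preOmega_comp_assoc {A B C D : ℕ → Type u}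
    (f : PreOmegaMap A B) (g : PreOmegaMap B C) (h : PreOmegaMap C D) (n : ℕ) :
    compPre (compPre h g) f n = compPre h (compPre g f) n := by
  funext p
  exact congrArg (h n) (DMap_compPre f g n 0 p).symm
end

section
/- Derivative sequences commute with the structural maps e^j: for every pre-ω-differential map f : A ⇒ B between ω-sequences of types and all n, i : ℕ and j ≤ n, (D^n f)_i ∘ e^{i+j} = e^j ∘ (D^{n+1} f)_i as functions (DA)_{n+i+1} → (D(Π^i B))_n. -/
universe u

/-! Induction on `n`, for all `i` at once. For `j = 0` both sides are the first component of
`(D^{n+1} f)_i`. For `j + 1 ≤ n + 1`, unfold `D^{n+2} f` once: the second component of the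
claim is the claim for `(n, i + 1, j)`, and the first one is the claim for `(n, i, j)` once
`e^{i+j}` has been moved past `e^i` by the identity `e^a ∘ e^{b+1} = e^b ∘ e^a` (`a ≤ b`).
What remains is transport along `(n + 1) + i = (n + i) + 1`, which is not definitional. -/

section

variable {A B : ℕ → Type u}

theorem eMap_cast (i j : ℕ) {m m' : ℕ} (h : m = m') (p : DSeqAt A i (m + 1)) :
    eMap A i j m' (cast (congrArg (DSeqAt A i) (congrArg Nat.succ h)) p) =
      cast (congrArg (DSeqAt A i) h) (eMap A i j m p) := by
  subst h; rfl

theorem eMap_eMap_succ_of_le (i : ℕ) :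
    ∀ {a b : ℕ} (m : ℕ), a ≤ b → ∀ p : DSeqAt A i (m + 2),
      eMap A i a m (eMap A i (b + 1) (m + 1) p) = eMap A i b m (eMap A i a (m + 1) p)
  | 0, _, _, _, _ => rfl
  | a + 1, _ + 1, 0, _, _ => by cases a <;> rfl
  | _ + 1, _ + 1, m + 1, hab, p =>
      Prod.ext (eMap_eMap_succ_of_le i m (Nat.le_of_succ_le_succ hab) p.1)
        (eMap_eMap_succ_of_le (i + 1) m (Nat.le_of_succ_le_succ hab) p.2)

theorem eMap_succ_succ (i j m : ℕ) (p : DSeqAt A i (m + 1 + 1)) :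
    eMap A i (j + 1) (m + 1) p = (eMap A i j m p.1, eMap A (i + 1) j m p.2) :=
  rfl

theorem DMap_succ (f : PreOmegaMap A B) (n i : ℕ) (q : DSeqAt A 0 (n + 1 + i)) :
    DMap f (n + 1) i q =
      (DMap f n i (eMap A 0 i (n + i) (cast (congrArg (DSeqAt A 0) (Nat.succ_add n i)) q)),
        DMap f n (i + 1) (cast (congrArg (DSeqAt A 0) (Nat.succ_add n i)) q)) :=
  rfl

theorem eMap_DMap_succ (f : PreOmegaMap A B) :
    ∀ {n i j : ℕ}, j ≤ n → ∀ q : DSeqAt A 0 (n + 1 + i),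
      eMap B i j n (DMap f (n + 1) i q) =
        DMap f n i (eMap A 0 (i + j) (n + i) (cast (congrArg (DSeqAt A 0) (Nat.succ_add n i)) q))
  | _, _, 0, _, _ => rfl
  | n + 1, i, j + 1, hj, q => by
    have hjn : j ≤ n := Nat.le_of_succ_le_succ hj
    rw [eMap_succ_succ, DMap_succ f (n + 1)]
    dsimp only
    rw [eMap_DMap_succ f hjn, eMap_DMap_succ f hjn, DMap_succ]
    generalize cast (congrArg (DSeqAt A 0) (Nat.succ_add (n + 1) i)) q = q'
    refine Prod.ext (congrArg (DMap f n i) ?_) (congrArg (DMap f n (i + 1)) ?_)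
    · rw [← eMap_cast _ _ (Nat.succ_add n i), ← eMap_cast _ _ (Nat.succ_add n i)]
      exact (eMap_eMap_succ_of_le 0 _ (Nat.le_add_right i j) _).symm
    · rw [← eMap_cast _ _ (Nat.succ_add n i), Nat.add_right_comm i 1 j]
      rfl

end

/-- Derivative sequences commute with the structural maps `e`: for `j ≤ n`,
`(Dⁿ f)_i ∘ e^{i+j} = e^j ∘ (D^{n+1} f)_i` as functions
`(D A)_{n+i+1} → (D (Πⁱ B))_n`. -/
theorem DMap_eMap {A B : ℕ → Type u} (f : PreOmegaMap A B)
    (n i j : ℕ) (hj : j ≤ n) :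
    DMap f n i ∘ eMap A 0 (i + j) (n + i) =
      eMap B i j n ∘ DMap f (n + 1) i ∘
        (fun p : DSeqAt A 0 (n + i + 1) =>
          cast (congrArg (DSeqAt A 0) (Nat.succ_add n i).symm) p) := by
  funext p
  simp only [Function.comp_apply, eMap_DMap_succ f hj, cast_cast, cast_eq]
end
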